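/- Let h, w, κ, n, τ, R be positive integers. Let V consist of w columns S₁,…,S_w, each a tuple of κ·h vertices with labels in [n] that is R-multilinear, and let E consist of perfect matchings M₁,…,M_w, where M_i is a perfect matching between S_i and S_{i+1} (indices mod w). Suppose every labeled simple edge of (V,E) (the unordered pair of endpoint labels) occurs with even multiplicity. Sample a hypergraph H by, independently for each i, partitioning the κ·h edges of M_i uniformly at random into h groups of κ edges and merging each group into one order-2κ hyperedge, whose label records the multiset of its κ endpoint labels in S_i and the multiset of its κ endpoint labels in S_{i+1}. Suppose τ is a number of distinct labeled hyperedges that is achievable by this sampling. Then the probability that the sampled H has every labeled hyperedge occurring with even multiplicity and exactly τ distinct labeled hyperedges is at most (2·e^κ·κ^κ·R^{κ+1}·w)^{wh} / (κh)^{(κ−1)(wh−τ)}. -/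

import Mathlib

open Finset

/-- The cyclic successor of `i` in `Fin w`. -/
def succW {w : ℕ} (i : Fin w) : Fin w := ⟨((i : ℕ) + 1) % w, Nat.mod_lt _ i.pos⟩

/-- A tuple is `R`-multilinear if no element of `[n]` occurs more than `R` times among
its coordinates. -/
def isMultilinearN {n R : ℕ} {ι : Type*} [Fintype ι] [DecidableEq ι]
    (I : ι → Fin n) : Prop :=
  ∀ a : Fin n, (Finset.univ.filter (fun t => I t = a)).card ≤ R

/-- An (ordered) grouping of the `κ·h` matching edges of a column into `h` groups of `κ`
edges each.  (Choosing such a function uniformly at random induces the uniform distribution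
on partitions of the `κ·h` edges into `h` unordered groups of size `κ`.) -/
abbrev Grouping (κ h : ℕ) :=
  {g : Fin (κ * h) → Fin h // ∀ j, (Finset.univ.filter (fun t => g t = j)).card = κ}

/-- The label of the order-`2κ` hyperedge obtained from group `j` of column `i`: the
multiset of the labels of its `κ` endpoints in `S_i` together with the multiset of the
labels of its `κ` endpoints in `S_{i+1}` (under the matching `Mch i`). -/
def hypLabel {n κ h w : ℕ} (S : Fin w → Fin (κ * h) → Fin n)
    (Mch : Fin w → Equiv.Perm (Fin (κ * h))) (ω : Fin w → Grouping κ h)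
    (p : Fin w × Fin h) : Multiset (Fin n) × Multiset (Fin n) :=
  ((Finset.univ.filter (fun t => (ω p.1).1 t = p.2)).val.map (S p.1),
   (Finset.univ.filter (fun t => (ω p.1).1 t = p.2)).val.map
      (fun t => S (succW p.1) (Mch p.1 t)))

/-!
Order the `wh` groups lexicographically by (column, index in column) and call a group a repeat
if an earlier group carries the same label. With exactly `τ` distinct labels there are `wh - τ`
repeats; choosing which groups they are and an earlier partner for each costs at most
`2^{wh} (wh)^{wh-τ}`. With this data fixed, reveal the groupings group by group. The `j`-th group
of a column is one of the `C(κ(h-j), κ)` sets of `κ` edges not used yet. A repeat must also copy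
the left label multiset of its partner, which is already known, so by `R`-multilinearity its
edges lie in a set of at most `Rκ` edges, which leaves at most `C(Rκ, κ)` choices. There are
`∏_j C(κ(h-j), κ) ≤ #groupings` choices for a column with no repeats. Each of the `c` repeats
of a column replaces a factor `C(κr, κ)`, `r = h - j`, by the smaller of it and `C(Rκ, κ)`,
which saves at least `(R/r)^κ`. The numbers `r` are distinct, so their product is at least `c!`,
and `h^c ≤ c! e^h` turns what remains into the stated bound.
-/

lemma Fin.card_le_prod_of_card_image_prefix_le {β : Type*} [DecidableEq β] :
    ∀ {M : ℕ} (T : Finset (Fin M → β)) (b : Fin M → ℕ),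
      (∀ k, ∀ f ∈ T, #({g ∈ T | ∀ j < k, g j = f j}.image (· k)) ≤ b k) →
      #T ≤ ∏ k, b k
  | 0, T, _, _ => by simpa using T.card_le_one_of_subsingleton
  | M + 1, T, b, hb => by
    have hfiber : ∀ a ∈ T.image Fin.init, #{g ∈ T | Fin.init g = a} ≤ b (Fin.last M) := by
      simp only [mem_image]
      rintro _ ⟨f, hf, rfl⟩
      refine le_trans (card_le_card_of_injOn (· (Fin.last M)) ?_ ?_) (hb _ f hf)
      · intro g hg
        simp only [mem_coe, mem_filter] at hg
        refine mem_coe.2 (mem_image_of_mem _ (mem_filter.2 ⟨hg.1, fun j hj => ?_⟩))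
        obtain ⟨j, rfl⟩ := Fin.exists_castSucc_eq.2 hj.ne
        exact congrFun hg.2 j
      · intro g₁ hg₁ g₂ hg₂ hlast
        simp only [mem_coe, mem_filter] at hg₁ hg₂
        rw [← Fin.snoc_init_self g₁, ← Fin.snoc_init_self g₂, hg₁.2, hg₂.2]
        exact congrArg _ hlast
    have hinit : #(T.image Fin.init) ≤ ∏ k : Fin M, b k.castSucc := by
      refine Fin.card_le_prod_of_card_image_prefix_le _ _ fun k a ha => ?_
      obtain ⟨f, hf, rfl⟩ := mem_image.1 ha
      refine le_trans (card_le_card ?_) (hb k.castSucc f hf)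
      simp only [image_subset_iff, mem_filter, mem_image]
      rintro _ ⟨⟨g, hg, rfl⟩, hgf⟩
      refine ⟨g, ⟨hg, fun j hj => ?_⟩, rfl⟩
      obtain ⟨j, rfl⟩ := Fin.exists_castSucc_eq.2 (hj.trans (Fin.castSucc_lt_last k)).ne
      exact hgf j (Fin.castSucc_lt_castSucc_iff.1 hj)
    calc #T ≤ b (Fin.last M) * #(T.image Fin.init) := card_le_mul_card_image _ _ hfiber
      _ ≤ b (Fin.last M) * ∏ k : Fin M, b k.castSucc := Nat.mul_le_mul_left _ hinit
      _ = ∏ k, b k := by rw [Fin.prod_univ_castSucc, mul_comm]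

lemma card_le_prod_of_card_image_prefix_le {α ι β : Type*} [Fintype ι] [LinearOrder ι]
    [DecidableEq β] {X : Finset α} {enc : α → ι → β} (henc : Set.InjOn enc X) (b : ι → ℕ)
    (hb : ∀ k, ∀ x ∈ X, #({y ∈ X | ∀ j < k, enc y j = enc x j}.image (enc · k)) ≤ b k) :
    #X ≤ ∏ k, b k := by
  set e := Fintype.orderIsoFinOfCardEq ι rfl
  have hinj : Set.InjOn (fun x => enc x ∘ e) X := fun x hx y hy hxy =>
    henc hx hy (e.surjective.injective_comp_right hxy)
  calc #X = #(X.image fun x => enc x ∘ e) := (card_image_of_injOn hinj).symm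
    _ ≤ ∏ k, b (e k) := by
      refine Fin.card_le_prod_of_card_image_prefix_le _ _ fun k f hf => ?_
      obtain ⟨x, hx, rfl⟩ := mem_image.1 hf
      refine le_trans (card_le_card ?_) (hb (e k) x hx)
      simp only [image_subset_iff, mem_filter, mem_image]
      rintro _ ⟨⟨y, hy, rfl⟩, hyx⟩
      refine ⟨y, ⟨hy, fun j hj => ?_⟩, rfl⟩
      simpa using hyx (e.symm j) (by simpa using e.symm.lt_iff_lt.2 hj)
    _ = ∏ k, b k := e.toEquiv.prod_comp b

lemma exists_card_eq_card_sub_card_image {ι γ : Type*} [Fintype ι] [LinearOrder ι]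
    [DecidableEq γ] (L : ι → γ) :
    ∃ D : Finset ι, #D = Fintype.card ι - #(univ.image L) ∧ ∀ p ∈ D, ∃ q < p, L q = L p := by
  set D := univ.filter fun p => ∃ q < p, L q = L p
  refine ⟨D, ?_, fun p hp => (mem_filter.1 hp).2⟩
  suffices #(univ.image L) = #Dᶜ by rw [this, card_compl, Nat.sub_sub_self (card_le_univ D)]
  have himage : Dᶜ.image L = univ.image L := by
    refine (image_subset_image (subset_univ _)).antisymm fun a ha => ?_
    obtain ⟨p, -, rfl⟩ := mem_image.1 ha
    have hne : (univ.filter fun q => L q = L p).Nonempty := ⟨p, by simp⟩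
    obtain ⟨-, hLmin⟩ := mem_filter.1 (min'_mem _ hne)
    refine mem_image.2 ⟨_, mem_compl.2 fun hD => ?_, hLmin⟩
    obtain ⟨q, hq, hLq⟩ := (mem_filter.1 hD).2
    exact hq.not_ge (min'_le _ _ (mem_filter.2 ⟨mem_univ q, hLq.trans hLmin⟩))
  rw [← himage, card_image_of_injOn]
  intro p hp q hq hpq
  simp only [coe_compl, Set.mem_compl_iff, mem_coe, D, mem_filter, mem_univ, true_and,
    not_exists, not_and] at hp hq
  rcases lt_trichotomy p q with h | h | h
  exacts [(hq p h hpq).elim, h, (hp q h hpq.symm).elim]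

/-- A labelling with `τ` distinct labels is certified by the set `D` of positions whose label
occurred earlier, together with an earlier position of the same label for each of them. -/
lemma card_filter_card_image_eq_le {Ω ι γ : Type*} [Fintype Ω] [Fintype ι] [LinearOrder ι]
    [DecidableEq γ] (L : Ω → ι → γ) (τ : ℕ) (M : Finset ι → ℕ)
    (hM : ∀ (D : Finset ι) (f : D → ι), (∀ p, f p < p) →
      #{ω | ∀ p : D, L ω (f p) = L ω p} ≤ M D) :
    #{ω | #(univ.image (L ω)) = τ}
      ≤ ∑ D ∈ powersetCard (Fintype.card ι - τ) univ, Fintype.card ι ^ #D * M D := by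
  classical
  set F : (D : Finset ι) → Finset (D → ι) := fun D => {f | ∀ p, f p < p}
  have hcover : ({ω | #(univ.image (L ω)) = τ} : Finset Ω)
      ⊆ (powersetCard (Fintype.card ι - τ) univ).biUnion
        fun D => (F D).biUnion fun f => {ω | ∀ p : D, L ω (f p) = L ω p} := by
    intro ω hω
    obtain ⟨D, hD, hDL⟩ := exists_card_eq_card_sub_card_image (L ω)
    choose f hf hLf using hDL
    simp only [mem_biUnion, mem_powersetCard, mem_filter, mem_univ, true_and, F]
    exact ⟨D, ⟨subset_univ D, hD.trans (by rw [(mem_filter.1 hω).2])⟩,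
      fun p => f p p.2, fun p => hf p p.2, fun p => hLf p p.2⟩
  calc _ ≤ _ := card_le_card hcover
    _ ≤ ∑ D ∈ powersetCard (Fintype.card ι - τ) univ,
          ∑ f ∈ F D, #{ω | ∀ p : D, L ω (f p) = L ω p} :=
        card_biUnion_le.trans (sum_le_sum fun D _ => card_biUnion_le)
    _ ≤ ∑ D ∈ powersetCard (Fintype.card ι - τ) univ, #(F D) * M D :=
        sum_le_sum fun D _ => (sum_le_sum fun f hf => hM D f (mem_filter.1 hf).2).trans_eq
          (by rw [sum_const, smul_eq_mul])
    _ ≤ _ := sum_le_sum fun D _ => Nat.mul_le_mul_right _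
        ((card_le_univ _).trans_eq (by rw [Fintype.card_fun, Fintype.card_coe]))

lemma card_image_le_choose {α β : Type*} [DecidableEq β] {Y : Finset α} {F : α → Finset β}
    {U : Finset β} {κ : ℕ} (hF : ∀ y ∈ Y, F y ⊆ U ∧ #(F y) = κ) :
    #(Y.image F) ≤ (#U).choose κ :=
  (card_le_card (image_subset_iff.2 fun y hy => mem_powersetCard.2 (hF y hy))).trans
    (card_powersetCard κ U).le

lemma card_filter_mem_le_of_isMultilinearN {ι : Type*} [Fintype ι] [DecidableEq ι]
    {n R : ℕ} {I : ι → Fin n} (hI : isMultilinearN (R := R) I) (ℓ : Multiset (Fin n)) :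
    #{t | I t ∈ ℓ} ≤ R * Multiset.card ℓ :=
  calc #{t | I t ∈ ℓ} ≤ R * #ℓ.toFinset :=
        card_le_mul_card_image_of_maps_to (fun t ht => by simpa using ht) R fun a _ =>
          (card_le_card (monotone_filter_left _ (subset_univ _))).trans (hI a)
    _ ≤ R * Multiset.card ℓ := Nat.mul_le_mul_left R (Multiset.toFinset_card_le ℓ)

lemma card_image_le_choose_of_isMultilinearN {α ι : Type*} [Fintype ι] [DecidableEq ι]
    {n R : ℕ} {I : ι → Fin n} (hI : isMultilinearN (R := R) I) {Y : Finset α}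
    {F : α → Finset ι} {ℓ : Multiset (Fin n)} (hF : ∀ y ∈ Y, (F y).val.map I = ℓ) :
    #(Y.image F) ≤ (R * Multiset.card ℓ).choose (Multiset.card ℓ) := by
  refine (card_image_le_choose (U := {t | I t ∈ ℓ}) fun y hy => ⟨fun t ht => ?_, ?_⟩).trans
    (Nat.choose_le_choose _ (card_filter_mem_le_of_isMultilinearN hI ℓ))
  · simpa [← hF y hy] using Multiset.mem_map_of_mem I ht
  · rw [← hF y hy, Multiset.card_map, card_val]

namespace Grouping

variable {κ h : ℕ}

def block (g : Grouping κ h) (j : Fin h) : Finset (Fin (κ * h)) :=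
  Finset.univ.filter (fun t => g.1 t = j)

@[simp]
lemma mem_block {g : Grouping κ h} {j : Fin h} {t : Fin (κ * h)} :
    t ∈ g.block j ↔ g.1 t = j := by
  simp [block]

lemma card_block (g : Grouping κ h) (j : Fin h) : #(g.block j) = κ := g.2 j

lemma card_compl_biUnion_block_Iio (g : Grouping κ h) (j : Fin h) :
    #((Iio j).biUnion g.block)ᶜ = κ * (h - j) := by
  rw [card_compl, card_biUnion, sum_const_nat fun j' _ => g.card_block j', Fin.card_Iio,
    Fintype.card_fin, Nat.mul_sub, Nat.mul_comm (j : ℕ)]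
  intro j₁ _ j₂ _ hne
  exact disjoint_left.2 fun t h₁ h₂ => hne ((mem_block.1 h₁).symm.trans (mem_block.1 h₂))

lemma card_image_block_le {α : Type*} (g₀ : Grouping κ h) (j : Fin h) {Y : Finset α}
    {G : α → Grouping κ h} (hY : ∀ y ∈ Y, ∀ j' < j, (G y).block j' = g₀.block j') :
    #(Y.image fun y => (G y).block j) ≤ (κ * (h - j)).choose κ := by
  rw [← g₀.card_compl_biUnion_block_Iio j]
  refine card_image_le_choose fun y hy =>
    ⟨fun t ht => mem_compl.2 fun ht' => ?_, card_block _ _⟩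
  obtain ⟨j', hj', htj'⟩ := mem_biUnion.1 ht'
  rw [← hY y hy j' (mem_Iio.1 hj'), mem_block] at htj'
  exact (mem_Iio.1 hj').ne (htj'.symm.trans (mem_block.1 ht))

end Grouping

def columnChoices (κ h : ℕ) : ℕ := ∏ j : Fin h, (κ * (h - j)).choose κ

open Nat in
lemma columnChoices_mul_factorial_pow (κ : ℕ) :
    ∀ h : ℕ, columnChoices κ h * κ ! ^ h = (κ * h)!
  | 0 => by simp [columnChoices]
  | h + 1 => by
    have hsub : κ * (h + 1) - κ = κ * h := by rw [Nat.mul_succ, Nat.add_sub_cancel]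
    have hchoose := Nat.choose_mul_factorial_mul_factorial (Nat.le_mul_of_pos_right κ h.succ_pos)
    rw [hsub] at hchoose
    rw [← hchoose, ← columnChoices_mul_factorial_pow κ h, columnChoices, columnChoices]
    simp only [Fin.prod_univ_succ, Fin.val_zero, Nat.sub_zero, Fin.val_succ,
      Nat.add_sub_add_right, pow_succ]
    ring

lemma columnChoices_pos (κ h : ℕ) : 0 < columnChoices κ h :=
  Nat.pos_of_ne_zero fun h0 => Nat.factorial_ne_zero (κ * h) <| by
    rw [← columnChoices_mul_factorial_pow, h0, zero_mul]

open Nat in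
/-- Composing a fixed grouping with all permutations of the edges: each fibre is a coset of the
stabiliser, which has order `(κ!)^h`. -/
lemma factorial_le_pow_factorial_mul_card_grouping (κ h : ℕ) :
    (κ * h)! ≤ κ ! ^ h * Fintype.card (Grouping κ h) := by
  classical
  set g₀ : Fin (κ * h) → Fin h := fun t => (finProdFinEquiv.symm t).2
  have hg₀ : ∀ j, #{t | g₀ t = j} = κ := fun j => by
    rw [card_equiv finProdFinEquiv.symm (t := univ ×ˢ {j}) (by simp [g₀, eq_comm])]
    simp
  set Φ : Equiv.Perm (Fin (κ * h)) → Grouping κ h := fun σ =>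
    ⟨g₀ ∘ σ, fun j => (card_equiv σ (by simp)).trans (hg₀ j)⟩
  have hfiber : ∀ g ∈ (univ : Finset (Grouping κ h)), #{σ | Φ σ = g} ≤ κ ! ^ h := by
    intro g _
    obtain he | ⟨σ₀, hσ₀⟩ := (univ.filter fun σ => Φ σ = g).eq_empty_or_nonempty
    · simp [he]
    calc #{σ | Φ σ = g} ≤ #{π : Equiv.Perm (Fin (κ * h)) | g₀ ∘ π = g₀} := by
          refine card_le_card_of_injOn (· * σ₀⁻¹) (fun σ hσ => ?_)
            fun σ _ σ' _ h => mul_right_cancel h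
          have hσσ₀ : g₀ ∘ σ = g₀ ∘ σ₀ :=
            congrArg Subtype.val ((mem_filter.1 hσ).2.trans (mem_filter.1 hσ₀).2.symm)
          simp only [mem_coe, mem_filter, mem_univ, true_and]
          funext t
          simpa using congrFun hσσ₀ (σ₀⁻¹ t)
      _ = ∏ j, (Fintype.card {t // g₀ t = j})! := by
          rw [← Fintype.card_subtype]; exact DomMulAct.stabilizer_card g₀
      _ = κ ! ^ h := by simp [Fintype.card_subtype, hg₀]
  calc (κ * h)! = #(univ : Finset (Equiv.Perm (Fin (κ * h)))) := by simp [Fintype.card_perm]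
    _ ≤ κ ! ^ h * #(univ : Finset (Grouping κ h)) :=
        card_le_mul_card_image_of_maps_to (fun _ _ => mem_univ _) _ hfiber
    _ = κ ! ^ h * Fintype.card (Grouping κ h) := rfl

lemma columnChoices_le_card_grouping (κ h : ℕ) :
    columnChoices κ h ≤ Fintype.card (Grouping κ h) := by
  have := factorial_le_pow_factorial_mul_card_grouping κ h
  rw [← columnChoices_mul_factorial_pow, mul_comm] at this
  exact Nat.le_of_mul_le_mul_left this (pow_pos κ.factorial_pos h)

lemma choose_mul_pow_le_of_le {κ R r : ℕ} (hRr : R ≤ r) :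
    (R * κ).choose κ * r ^ κ ≤ (κ * r).choose κ * R ^ κ := by
  have hdesc : (R * κ).descFactorial κ * r ^ κ ≤ (κ * r).descFactorial κ * R ^ κ :=
    calc (R * κ).descFactorial κ * r ^ κ = ∏ i ∈ range κ, (R * κ - i) * r := by
          rw [Nat.descFactorial_eq_prod_range, prod_mul_distrib, prod_const, card_range]
      _ ≤ ∏ i ∈ range κ, (κ * r - i) * R := prod_le_prod' fun i _ => by
          rw [Nat.sub_mul, Nat.sub_mul, show κ * r * R = R * κ * r by ring]
          exact Nat.sub_le_sub_left (Nat.mul_le_mul_left i hRr) _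
      _ = (κ * r).descFactorial κ * R ^ κ := by
          rw [Nat.descFactorial_eq_prod_range, prod_mul_distrib, prod_const, card_range]
  rw [Nat.descFactorial_eq_factorial_mul_choose, Nat.descFactorial_eq_factorial_mul_choose,
    mul_assoc, mul_assoc] at hdesc
  exact Nat.le_of_mul_le_mul_left hdesc κ.factorial_pos

lemma min_choose_mul_pow_le (κ R r : ℕ) :
    min ((κ * r).choose κ) ((R * κ).choose κ) * r ^ κ ≤ (κ * r).choose κ * R ^ κ := by
  rcases le_total r R with hrR | hRr
  · exact Nat.mul_le_mul (min_le_left _ _) (Nat.pow_le_pow_left hrR κ)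
  · exact (Nat.mul_le_mul_right _ (min_le_right _ _)).trans (choose_mul_pow_le_of_le hRr)

open Nat in
lemma factorial_card_le_prod_sub {h : ℕ} (s : Finset (Fin h)) : (#s)! ≤ ∏ j ∈ s, (h - j) := by
  induction s using Finset.induction_on_min with
  | empty => simp
  | insert a s has ih =>
    have has' : a ∉ s := fun ha => (has a ha).false
    have hs : #s ≤ h - 1 - a := by
      rw [← Fin.card_Ioi]
      exact card_le_card fun x hx => mem_Ioi.2 (has x hx)
    have ha := a.isLt
    rw [card_insert_of_notMem has', prod_insert has', factorial_succ]
    exact Nat.mul_le_mul (by omega) ih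

def slotBound (κ R : ℕ) {h : ℕ} (s : Finset (Fin h)) (j : Fin h) : ℕ :=
  if j ∈ s then min ((κ * (h - j)).choose κ) ((R * κ).choose κ) else (κ * (h - j)).choose κ

def columnBound (κ R : ℕ) {h : ℕ} (s : Finset (Fin h)) : ℕ := ∏ j, slotBound κ R s j

open Nat in
lemma columnBound_mul_factorial_pow_le (κ R : ℕ) {h : ℕ} (s : Finset (Fin h)) :
    columnBound κ R s * (#s)! ^ κ ≤ columnChoices κ h * R ^ (κ * #s) :=
  calc columnBound κ R s * (#s)! ^ κ ≤ columnBound κ R s * ∏ j ∈ s, (h - j) ^ κ := by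
        rw [prod_pow]; gcongr; exact factorial_card_le_prod_sub s
    _ = ∏ j, (slotBound κ R s j * if j ∈ s then (h - j) ^ κ else 1) := by
        rw [prod_mul_distrib, prod_ite_mem, univ_inter, columnBound]
    _ ≤ ∏ j : Fin h, ((κ * (h - j)).choose κ * if j ∈ s then R ^ κ else 1) :=
        prod_le_prod' fun j _ => by
          unfold slotBound
          split_ifs
          · exact min_choose_mul_pow_le κ R _
          · exact le_rfl
    _ = columnChoices κ h * R ^ (κ * #s) := by
        rw [prod_mul_distrib, prod_ite_mem, univ_inter, prod_const, ← pow_mul, columnChoices]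

open Nat in
lemma pow_mul_pow_mul_pow_le_factorial_pow_mul_pow {κ R w h c : ℕ} (hκ : 0 < κ) (hR : 0 < R)
    (hw : 0 < w) (hc : c ≤ h) :
    ((w : ℝ) * h) ^ c * ((κ : ℝ) * h) ^ ((κ - 1) * c) * (R : ℝ) ^ (κ * c)
      ≤ (c ! : ℝ) ^ κ * (Real.exp 1 ^ κ * (κ : ℝ) ^ κ * (R : ℝ) ^ (κ + 1) * w) ^ h := by
  obtain ⟨m, rfl⟩ : ∃ m, κ = m + 1 := ⟨κ - 1, by omega⟩
  have hpow : (h : ℝ) ^ c ≤ c ! * Real.exp 1 ^ h := by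
    rw [Real.exp_one_pow, ← div_le_iff₀' (by positivity)]
    exact Real.pow_div_factorial_le_exp _ (by positivity) c
  have hw' : (w : ℝ) ^ c ≤ (w : ℝ) ^ h := pow_le_pow_right₀ (by exact_mod_cast hw) hc
  have hκ' : ((m + 1 : ℕ) : ℝ) ^ (m * c) ≤ (((m + 1 : ℕ) : ℝ) ^ (m + 1)) ^ h := by
    rw [← pow_mul]
    exact pow_le_pow_right₀ (by simp) (by nlinarith)
  have hR' : (R : ℝ) ^ ((m + 1) * c) ≤ ((R : ℝ) ^ (m + 1 + 1)) ^ h := by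
    rw [← pow_mul]
    exact pow_le_pow_right₀ (by exact_mod_cast hR) (by nlinarith)
  calc ((w : ℝ) * h) ^ c * (((m + 1 : ℕ) : ℝ) * h) ^ ((m + 1 - 1) * c)
        * (R : ℝ) ^ ((m + 1) * c)
      = (w : ℝ) ^ c * ((m + 1 : ℕ) : ℝ) ^ (m * c) * (R : ℝ) ^ ((m + 1) * c)
          * ((h : ℝ) ^ c) ^ (m + 1) := by
        rw [Nat.add_sub_cancel]; ring
    _ ≤ (w : ℝ) ^ h * (((m + 1 : ℕ) : ℝ) ^ (m + 1)) ^ h * ((R : ℝ) ^ (m + 1 + 1)) ^ h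
          * (c ! * Real.exp 1 ^ h) ^ (m + 1) := by gcongr
    _ = _ := by ring

open Nat in
lemma columnBound_mul_pow_le {κ R w h : ℕ} (hκ : 0 < κ) (hR : 0 < R) (hw : 0 < w)
    (s : Finset (Fin h)) :
    (columnBound κ R s : ℝ) * ((w : ℝ) * h) ^ #s * ((κ : ℝ) * h) ^ ((κ - 1) * #s)
      ≤ columnChoices κ h * (Real.exp 1 ^ κ * (κ : ℝ) ^ κ * (R : ℝ) ^ (κ + 1) * w) ^ h := by
  have hnat : (columnBound κ R s : ℝ) * ((#s)! : ℝ) ^ κ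
      ≤ columnChoices κ h * (R : ℝ) ^ (κ * #s) := by
    exact_mod_cast columnBound_mul_factorial_pow_le κ R s
  have hreal := pow_mul_pow_mul_pow_le_factorial_pow_mul_pow hκ hR hw
    ((card_le_univ s).trans_eq (Fintype.card_fin h))
  have hpos : (0 : ℝ) < ((#s)! : ℝ) ^ κ * (R : ℝ) ^ (κ * #s) := by positivity
  refine le_of_mul_le_mul_right ?_ hpos
  calc _ = ((columnBound κ R s : ℝ) * ((#s)! : ℝ) ^ κ)
        * (((w : ℝ) * h) ^ #s * ((κ : ℝ) * h) ^ ((κ - 1) * #s) * (R : ℝ) ^ (κ * #s)) := by ring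
    _ ≤ _ := mul_le_mul hnat hreal (by positivity) (by positivity)
    _ = _ := by ring

section Hypergraph

variable {n κ h w : ℕ}

/-- Groups are indexed by `Fin w ×ₗ Fin h`, so that revealing them in increasing order goes
through the columns one after the other. -/
def blocks (ω : Fin w → Grouping κ h) (q : Fin w ×ₗ Fin h) : Finset (Fin (κ * h)) :=
  (ω (ofLex q).1).block (ofLex q).2

lemma blocks_injective : Function.Injective (blocks : (Fin w → Grouping κ h) → _) := by
  intro ω ω' he
  funext i
  refine Subtype.ext (funext fun t => ?_)
  have ht : t ∈ blocks ω (toLex (i, (ω i).1 t)) := Grouping.mem_block.2 rfl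
  rw [he] at ht
  exact (Grouping.mem_block.1 ht).symm

def column (D : Finset (Fin w ×ₗ Fin h)) (i : Fin w) : Finset (Fin h) :=
  univ.filter fun j => toLex (i, j) ∈ D

lemma sum_card_column (D : Finset (Fin w ×ₗ Fin h)) : ∑ i, #(column D i) = #D := by
  calc ∑ i, #(column D i) = ∑ k : Fin w ×ₗ Fin h, if k ∈ D then 1 else 0 := by
        rw [← toLex.sum_comp, Fintype.sum_prod_type]
        simp [column]
    _ = #D := by simp

lemma card_image_blocks_le (S : Fin w → Fin (κ * h) → Fin n)
    (Mch : Fin w → Equiv.Perm (Fin (κ * h))) {R : ℕ} (hmult : ∀ i, isMultilinearN (R := R) (S i))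
    {D : Finset (Fin w ×ₗ Fin h)} {f : D → Fin w ×ₗ Fin h} (hf : ∀ p, f p < p)
    (ω₀ : Fin w → Grouping κ h) (i : Fin w) (j : Fin h) {Y : Finset (Fin w → Grouping κ h)}
    (hY : ∀ ω ∈ Y, (∀ p : D, hypLabel S Mch ω (ofLex (f p)) = hypLabel S Mch ω (ofLex p)) ∧
      ∀ q < toLex (i, j), blocks ω q = blocks ω₀ q) :
    #(Y.image (blocks · (toLex (i, j)))) ≤ slotBound κ R (column D i) j := by
  have hfree : #(Y.image (blocks · (toLex (i, j)))) ≤ (κ * (h - j)).choose κ :=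
    Grouping.card_image_block_le (ω₀ i) j (G := fun ω => ω i) fun ω hω j' hj' =>
      (hY ω hω).2 (toLex (i, j')) (Prod.Lex.toLex_lt_toLex.2 (Or.inr ⟨rfl, hj'⟩))
  unfold slotBound
  split_ifs with hk
  · refine le_min hfree ?_
    set p : D := ⟨_, (mem_filter.1 hk).2⟩
    have hrepeat := card_image_le_choose_of_isMultilinearN (hmult i) (Y := Y)
      (F := (blocks · (toLex (i, j)))) (ℓ := (blocks ω₀ (f p)).val.map (S (ofLex (f p)).1))
      fun ω hω => by
        calc (blocks ω (toLex (i, j))).val.map (S i) = (hypLabel S Mch ω (i, j)).1 := rfl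
          _ = (hypLabel S Mch ω (ofLex (f p))).1 := by rw [(hY ω hω).1 p]; rfl
          _ = (blocks ω₀ (f p)).val.map (S (ofLex (f p)).1) := by
            rw [← (hY ω hω).2 _ (hf p)]; rfl
    rwa [Multiset.card_map, card_val, blocks, Grouping.card_block] at hrepeat
  · exact hfree

lemma card_filter_hypLabel_eq_le (S : Fin w → Fin (κ * h) → Fin n)
    (Mch : Fin w → Equiv.Perm (Fin (κ * h))) {R : ℕ} (hmult : ∀ i, isMultilinearN (R := R) (S i))
    (D : Finset (Fin w ×ₗ Fin h)) (f : D → Fin w ×ₗ Fin h) (hf : ∀ p, f p < p) :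
    #{ω : Fin w → Grouping κ h |
        ∀ p : D, hypLabel S Mch ω (ofLex (f p)) = hypLabel S Mch ω (ofLex p)}
      ≤ ∏ i, columnBound κ R (column D i) := by
  calc _ ≤ ∏ k : Fin w ×ₗ Fin h, slotBound κ R (column D (ofLex k).1) (ofLex k).2 :=
        card_le_prod_of_card_image_prefix_le blocks_injective.injOn _ fun k ω₀ _ =>
          card_image_blocks_le S Mch hmult hf ω₀ (ofLex k).1 (ofLex k).2 fun ω hω =>
            ⟨(mem_filter.1 (mem_filter.1 hω).1).2, (mem_filter.1 hω).2⟩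
    _ = ∏ i, columnBound κ R (column D i) := by
      rw [← toLex.prod_comp, Fintype.prod_prod_type]
      rfl

lemma pow_card_mul_prod_columnBound_le {R : ℕ} (hκ : 0 < κ) (hR : 0 < R)
    (D : Finset (Fin w ×ₗ Fin h)) :
    (((w * h) ^ #D * ∏ i, columnBound κ R (column D i) : ℕ) : ℝ)
        * ((κ : ℝ) * h) ^ ((κ - 1) * #D)
      ≤ (columnChoices κ h : ℝ) ^ w
        * (Real.exp 1 ^ κ * (κ : ℝ) ^ κ * (R : ℝ) ^ (κ + 1) * w) ^ (w * h) := by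
  calc _ = ∏ i, ((columnBound κ R (column D i) : ℝ) * ((w : ℝ) * h) ^ #(column D i)
          * ((κ : ℝ) * h) ^ ((κ - 1) * #(column D i))) := by
        rw [← sum_card_column D, mul_sum, ← prod_pow_eq_pow_sum, ← prod_pow_eq_pow_sum,
          prod_mul_distrib, prod_mul_distrib]
        push_cast
        ring
    _ ≤ ∏ _i : Fin w, ((columnChoices κ h : ℝ)
          * (Real.exp 1 ^ κ * (κ : ℝ) ^ κ * (R : ℝ) ^ (κ + 1) * w) ^ h) :=
        prod_le_prod (fun i _ => by positivity) fun i _ => columnBound_mul_pow_le hκ hR i.pos _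
    _ = _ := by rw [prod_const, card_univ, Fintype.card_fin, mul_pow, ← pow_mul, mul_comm h w]

lemma card_filter_card_image_hypLabel_eq_mul_pow_le {R : ℕ} (hκ : 0 < κ) (hR : 0 < R)
    (S : Fin w → Fin (κ * h) → Fin n) (Mch : Fin w → Equiv.Perm (Fin (κ * h)))
    (hmult : ∀ i, isMultilinearN (R := R) (S i)) (τ : ℕ) :
    (#{ω : Fin w → Grouping κ h | #(univ.image (hypLabel S Mch ω)) = τ} : ℝ)
        * ((κ : ℝ) * h) ^ ((κ - 1) * (w * h - τ))
      ≤ (columnChoices κ h : ℝ) ^ w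
        * (2 * Real.exp 1 ^ κ * (κ : ℝ) ^ κ * (R : ℝ) ^ (κ + 1) * w) ^ (w * h) := by
  set 𝒟 := powersetCard (w * h - τ) (univ : Finset (Fin w ×ₗ Fin h))
  have hcount := card_filter_card_image_eq_le (fun ω (q : Fin w ×ₗ Fin h) =>
    hypLabel S Mch ω (ofLex q)) τ _ (card_filter_hypLabel_eq_le S Mch hmult)
  rw [Fintype.card_lex, Fintype.card_prod, Fintype.card_fin, Fintype.card_fin] at hcount
  have h𝒟 : (#𝒟 : ℝ) ≤ 2 ^ (w * h) := by
    rw [card_powersetCard, card_univ, Fintype.card_lex, Fintype.card_prod, Fintype.card_fin,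
      Fintype.card_fin]
    exact_mod_cast Nat.choose_le_two_pow _ _
  calc _ ≤ (∑ D ∈ 𝒟, (((w * h) ^ #D * ∏ i, columnBound κ R (column D i) : ℕ) : ℝ))
          * ((κ : ℝ) * h) ^ ((κ - 1) * (w * h - τ)) := by
        gcongr
        exact_mod_cast hcount
    _ = ∑ D ∈ 𝒟, (((w * h) ^ #D * ∏ i, columnBound κ R (column D i) : ℕ) : ℝ)
          * ((κ : ℝ) * h) ^ ((κ - 1) * #D) := by
        rw [sum_mul]
        exact sum_congr rfl fun D hD => by rw [(mem_powersetCard.1 hD).2]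
    _ ≤ #𝒟 * ((columnChoices κ h : ℝ) ^ w
          * (Real.exp 1 ^ κ * (κ : ℝ) ^ κ * (R : ℝ) ^ (κ + 1) * w) ^ (w * h)) :=
        (sum_le_sum fun D _ => pow_card_mul_prod_columnBound_le hκ hR D).trans_eq
          (by rw [sum_const, nsmul_eq_mul])
    _ ≤ 2 ^ (w * h) * ((columnChoices κ h : ℝ) ^ w
          * (Real.exp 1 ^ κ * (κ : ℝ) ^ κ * (R : ℝ) ^ (κ + 1) * w) ^ (w * h)) := by gcongr
    _ = _ := by ring

end Hypergraph

open Classical in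
theorem even_hypergraph_sampling_probability_bound_general
    (h w κ n τ R : ℕ) (hh : 0 < h) (hκ : 0 < κ) (hR : 0 < R)
    (S : Fin w → Fin (κ * h) → Fin n)
    (hmult : ∀ i, isMultilinearN (R := R) (S i))
    (Mch : Fin w → Equiv.Perm (Fin (κ * h))) :
    (((Finset.univ : Finset (Fin w → Grouping κ h)).filter (fun ω =>
        (∀ ℓ : Multiset (Fin n) × Multiset (Fin n),
          Even (((Finset.univ : Finset (Fin w × Fin h)).filter
            (fun p => hypLabel S Mch ω p = ℓ)).card)) ∧
        ((Finset.univ : Finset (Fin w × Fin h)).image (hypLabel S Mch ω)).card = τ)).card : ℝ)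
        / (Fintype.card (Fin w → Grouping κ h) : ℝ)
      ≤ (2 * Real.exp 1 ^ κ * (κ : ℝ) ^ κ * (R : ℝ) ^ (κ + 1) * w) ^ (w * h)
        / ((κ * h : ℝ)) ^ ((κ - 1) * (w * h - τ)) := by
  have hN : (0 : ℝ) < (columnChoices κ h : ℝ) ^ w := by
    have := columnChoices_pos κ h
    positivity
  have hΩ : (columnChoices κ h : ℝ) ^ w ≤ Fintype.card (Fin w → Grouping κ h) := by
    rw [Fintype.card_fun, Fintype.card_fin]
    exact_mod_cast Nat.pow_le_pow_left (columnChoices_le_card_grouping κ h) w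
  calc _ ≤ (#{ω : Fin w → Grouping κ h | #(univ.image (hypLabel S Mch ω)) = τ} : ℝ)
        / (columnChoices κ h : ℝ) ^ w :=
        div_le_div₀ (by positivity)
          (Nat.cast_le.2 (card_le_card (monotone_filter_right _ fun _ _ => And.right))) hN hΩ
    _ ≤ _ := by
      rw [div_le_div_iff₀ hN (by positivity)]
      exact (card_filter_card_image_hypLabel_eq_mul_pow_le hκ hR S Mch hmult τ).trans_eq
        (mul_comm _ _)

open Classical in
theorem even_hypergraph_sampling_probability_bound
    (h w κ n τ R : ℕ) (hh : 0 < h) (hw : 0 < w) (hκ : 0 < κ) (hn : 0 < n)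
    (hτ : 0 < τ) (hR : 0 < R)
    (S : Fin w → Fin (κ * h) → Fin n)
    (hmult : ∀ i, isMultilinearN (R := R) (S i))
    (Mch : Fin w → Equiv.Perm (Fin (κ * h)))
    (heven : ∀ e : Sym2 (Fin n),
      Even (((Finset.univ : Finset (Fin w × Fin (κ * h))).filter
        (fun p => s(S p.1 p.2, S (succW p.1) (Mch p.1 p.2)) = e)).card))
    (hach : ∃ ω : Fin w → Grouping κ h,
      ((Finset.univ : Finset (Fin w × Fin h)).image (hypLabel S Mch ω)).card = τ) :
    (((Finset.univ : Finset (Fin w → Grouping κ h)).filter (fun ω =>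
        (∀ ℓ : Multiset (Fin n) × Multiset (Fin n),
          Even (((Finset.univ : Finset (Fin w × Fin h)).filter
            (fun p => hypLabel S Mch ω p = ℓ)).card)) ∧
        ((Finset.univ : Finset (Fin w × Fin h)).image (hypLabel S Mch ω)).card = τ)).card : ℝ)
        / (Fintype.card (Fin w → Grouping κ h) : ℝ)
      ≤ (2 * Real.exp 1 ^ κ * (κ : ℝ) ^ κ * (R : ℝ) ^ (κ + 1) * w) ^ (w * h)
        / ((κ * h : ℝ)) ^ ((κ - 1) * (w * h - τ)) :=
  even_hypergraph_sampling_probability_bound_general h w κ n τ R hh hκ hR S hmult Mch
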